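/- arXiv:alg-geom/9703013 — 4 statements merged into one kernel-verified Lean document; each statement's English description precedes it below -/
import Mathlib

section
/- Let R = ℚ[h,k]/(h³, k³, h² − h·k + k²) with basis T₀ = 1, T₁ = h, T₂ = h², T₃ = k, T₄ = k², T₅ = h²·k, and ∫ : R → ℚ the coefficient-of-T₅ functional. Then for every x ∈ R one has x = Σ_{s=0}^{5} ∫(x · T_s) · T_{5−s}. -/
open MvPolynomial

noncomputable section

abbrev Irel : Ideal (MvPolynomial (Fin 2) ℚ) :=
  Ideal.span ({X 0 ^ 3, X 1 ^ 3, X 0 ^ 2 - X 0 * X 1 + X 1 ^ 2} : Set (MvPolynomial (Fin 2) ℚ))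

abbrev Rring : Type := MvPolynomial (Fin 2) ℚ ⧸ Irel

def h : Rring := Ideal.Quotient.mk Irel (X 0)
def k : Rring := Ideal.Quotient.mk Irel (X 1)

def T : Fin 6 → Rring := ![1, h, h ^ 2, k, k ^ 2, h ^ 2 * k]

lemma h_cube : h ^ 3 = 0 := by
  show Ideal.Quotient.mk Irel (X 0) ^ 3 = 0
  rw [← map_pow, Ideal.Quotient.eq_zero_iff_mem]
  exact Ideal.subset_span (by simp)

lemma k_cube : k ^ 3 = 0 := by
  show Ideal.Quotient.mk Irel (X 1) ^ 3 = 0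
  rw [← map_pow, Ideal.Quotient.eq_zero_iff_mem]
  exact Ideal.subset_span (by simp)

lemma hk_rel : h * k = h ^ 2 + k ^ 2 := by
  have hm : (X 0 ^ 2 - X 0 * X 1 + X 1 ^ 2 : MvPolynomial (Fin 2) ℚ) ∈ Irel :=
    Ideal.subset_span (by simp)
  have h0 := Ideal.Quotient.eq_zero_iff_mem.2 hm
  have h1 : h ^ 2 - h * k + k ^ 2 = 0 := by
    simpa [h, k, map_sub, map_add, map_mul, map_pow] using h0
  linear_combination -h1

lemma hk2 : h * k ^ 2 = h ^ 2 * k := by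
  linear_combination k * hk_rel + k_cube

lemma h2k2 : h ^ 2 * k ^ 2 = 0 := by
  linear_combination (h * k) * hk_rel + k * h_cube + h * k_cube

lemma m_hh : h * h = h ^ 2 := by ring
lemma m_kk : k * k = k ^ 2 := by ring
lemma m_kh : k * h = h ^ 2 + k ^ 2 := by linear_combination hk_rel
lemma m_hh2 : h * h ^ 2 = 0 := by linear_combination h_cube
lemma m_h2h : h ^ 2 * h = 0 := by linear_combination h_cube
lemma m_kk2 : k * k ^ 2 = 0 := by linear_combination k_cube
lemma m_k2k : k ^ 2 * k = 0 := by linear_combination k_cube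
lemma m_k2h : k ^ 2 * h = h ^ 2 * k := by linear_combination hk2
lemma m_kh2 : k * h ^ 2 = h ^ 2 * k := by ring
lemma m_k2h2 : k ^ 2 * h ^ 2 = 0 := by linear_combination h2k2
lemma m_h2h2 : h ^ 2 * h ^ 2 = 0 := by linear_combination h * h_cube
lemma m_k2k2 : k ^ 2 * k ^ 2 = 0 := by linear_combination k * k_cube
lemma m_ht5 : h * (h ^ 2 * k) = 0 := by linear_combination k * h_cube
lemma m_t5h : h ^ 2 * k * h = 0 := by linear_combination k * h_cube
lemma m_kt5 : k * (h ^ 2 * k) = 0 := by linear_combination h2k2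
lemma m_t5k : h ^ 2 * k * k = 0 := by linear_combination h2k2
lemma m_h2t5 : h ^ 2 * (h ^ 2 * k) = 0 := by linear_combination (h * k) * h_cube
lemma m_t5h2 : h ^ 2 * k * h ^ 2 = 0 := by linear_combination (h * k) * h_cube
lemma m_k2t5 : k ^ 2 * (h ^ 2 * k) = 0 := by linear_combination h ^ 2 * k_cube
lemma m_t5k2 : h ^ 2 * k * k ^ 2 = 0 := by linear_combination h ^ 2 * k_cube
lemma m_t5t5 : h ^ 2 * k * (h ^ 2 * k) = 0 := by linear_combination (h * k ^ 2) * h_cube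

set_option maxHeartbeats 1000000 in
/-- Reproducing property of the diagonal decomposition: every x ∈ R satisfies
x = Σ_{s=0}^{5} ∫(x · T_s) · T_{5−s}, where ∫ is the coefficient of T₅ = h²k. -/
theorem diagonal_reproducing (B : Module.Basis (Fin 6) ℚ Rring) (hB : ∀ i, B i = T i)
    (x : Rring) :
    x = ∑ s : Fin 6, B.repr (x * T s) 5 • T ⟨5 - (s : ℕ), by omega⟩ := by
  have rp : ∀ j : Fin 6, B.repr (T j) = Finsupp.single j 1 := fun j => by
    rw [← hB]; exact B.repr_self j
  have r0 : B.repr 1 = Finsupp.single 0 1 := by simpa [T] using rp 0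
  have r1 : B.repr h = Finsupp.single 1 1 := by simpa [T] using rp 1
  have r2 : B.repr (h ^ 2) = Finsupp.single 2 1 := by simpa [T] using rp 2
  have r3 : B.repr k = Finsupp.single 3 1 := by simpa [T] using rp 3
  have r4 : B.repr (k ^ 2) = Finsupp.single 4 1 := by simpa [T] using rp 4
  have r5 : B.repr (h ^ 2 * k) = Finsupp.single 5 1 := by simpa [T] using rp 5
  have hT5 : (![1, h, h ^ 2, k, k ^ 2, h ^ 2 * k] : Fin 6 → Rring) 5 = h ^ 2 * k := rfl
  have key : ∀ i s : Fin 6, B.repr (T i * T s) 5 = if (i : ℕ) + s = 5 then 1 else 0 := by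
    intro i s
    fin_cases i <;> fin_cases s <;>
      simp [T, hT5, m_hh, m_kk, hk_rel, m_kh, m_hh2, m_h2h, m_kk2, m_k2k, hk2, m_k2h, m_kh2,
        h2k2, m_k2h2, m_h2h2, m_k2k2, m_ht5, m_t5h, m_kt5, m_t5k, m_h2t5, m_t5h2,
        m_k2t5, m_t5k2, m_t5t5, r0, r1, r2, r3, r4, r5, map_add, Finsupp.add_apply,
        Finsupp.single_apply]
  have hx : x = ∑ i : Fin 6, B.repr x i • T i := by
    conv_lhs => rw [← B.sum_repr x]
    simp [hB]
  have hrepr : ∀ s : Fin 6, B.repr (x * T s) 5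
      = ∑ i : Fin 6, B.repr x i * (if (i : ℕ) + s = 5 then 1 else 0) := by
    intro s
    conv_lhs => rw [hx]
    rw [Finset.sum_mul, map_sum, Finsupp.finset_sum_apply]
    refine Finset.sum_congr rfl fun i _ => ?_
    rw [smul_mul_assoc, map_smul, Finsupp.smul_apply, smul_eq_mul, key]
  have e0 : (![1, h, h ^ 2, k, k ^ 2, h ^ 2 * k] : Fin 6 → Rring) ⟨0, by omega⟩ = 1 := rfl
  have e1 : (![1, h, h ^ 2, k, k ^ 2, h ^ 2 * k] : Fin 6 → Rring) ⟨1, by omega⟩ = h := rfl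
  have e2 : (![1, h, h ^ 2, k, k ^ 2, h ^ 2 * k] : Fin 6 → Rring) ⟨2, by omega⟩ = h ^ 2 := rfl
  have e3 : (![1, h, h ^ 2, k, k ^ 2, h ^ 2 * k] : Fin 6 → Rring) ⟨3, by omega⟩ = k := rfl
  have e4 : (![1, h, h ^ 2, k, k ^ 2, h ^ 2 * k] : Fin 6 → Rring) ⟨4, by omega⟩ = k ^ 2 := rfl
  have e5 : (![1, h, h ^ 2, k, k ^ 2, h ^ 2 * k] : Fin 6 → Rring) ⟨5, by omega⟩ = h ^ 2 * k := rfl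
  have v0 : ((0 : Fin 6) : ℕ) = 0 := rfl
  have v1 : ((1 : Fin 6) : ℕ) = 1 := rfl
  have v2 : ((2 : Fin 6) : ℕ) = 2 := rfl
  have v3 : ((3 : Fin 6) : ℕ) = 3 := rfl
  have v4 : ((4 : Fin 6) : ℕ) = 4 := rfl
  have v5 : ((5 : Fin 6) : ℕ) = 5 := rfl
  conv_lhs => rw [hx, Fin.sum_univ_six]
  rw [Fin.sum_univ_six]
  simp only [hrepr, Fin.sum_univ_six]
  norm_num [T, v0, v1, v2, v3, v4, v5, e0, e1, e2, e3, e4, e5]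
  ac_rfl
end
end

section
/- Define N : ℕ≥1 → ℚ by N(1) = 1 and, for d ≥ 2, N(d) = Σ_{d₁+d₂=d, d₁,d₂≥1} N(d₁)·N(d₂)·( d₁²·d₂²·C(3d−4, 3d₁−2) − d₁³·d₂·C(3d−4, 3d₁−1) ). Then N(5) = 87304. -/
noncomputable section

/-- The right-hand side of Kontsevich's recursion: the sum over ordered pairs
(d₁, d₂) of positive integers with d₁ + d₂ = d. -/
def kontRHS (N : ℕ → ℚ) (d : ℕ) : ℚ :=
  ∑ d1 ∈ Finset.Ico 1 d,
    N d1 * N (d - d1) *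
      ((d1 : ℚ) ^ 2 * ((d - d1 : ℕ) : ℚ) ^ 2 * ((3 * d - 4).choose (3 * d1 - 2) : ℚ) -
       (d1 : ℚ) ^ 3 * ((d - d1 : ℕ) : ℚ) * ((3 * d - 4).choose (3 * d1 - 1) : ℚ))

/-- Kontsevich's recursion with N(1) = 1 gives N(5) = 87304. -/
theorem kontsevich_N5 (N : ℕ → ℚ) (h1 : N 1 = 1)
    (hrec : ∀ d, 2 ≤ d → N d = kontRHS N d) :
    N 5 = 87304 := by
  have h2 : N 2 = 1 := by
    rw [hrec 2 (by norm_num), kontRHS]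
    simp [Finset.sum_Ico_eq_sum_range, h1]
    norm_num
  have h3 : N 3 = 12 := by
    rw [hrec 3 (by norm_num), kontRHS]
    simp [Finset.sum_Ico_eq_sum_range, Finset.sum_range_succ, h1, h2]
    norm_num [Nat.choose]
  have h4 : N 4 = 620 := by
    rw [hrec 4 (by norm_num), kontRHS]
    simp [Finset.sum_Ico_eq_sum_range, Finset.sum_range_succ, h1, h2, h3]
    norm_num [Nat.choose]
  rw [hrec 5 (by norm_num), kontRHS]
  simp [Finset.sum_Ico_eq_sum_range, Finset.sum_range_succ, h1, h2, h3, h4]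
  norm_num [Nat.choose]
end
end

section
/- Let N_d(a,b,c) ∈ ℚ be any family of numbers, defined for d ≥ 1 and a + b + 2c = 3d − 1 (and set to 0 otherwise), satisfying the paper's contact recursion (recurs) for all d ≥ 2 and a ≥ 3. If b = c = 0 and a = 3d − 1, then the recursion reduces exactly to Kontsevich's formula: N_d(3d−1,0,0) = Σ_{d₁+d₂=d, d₁,d₂≥1} N_{d₁}(3d₁−1,0,0)·N_{d₂}(3d₂−1,0,0)·( d₁²d₂²·C(3d−4, 3d₁−2) − d₁³d₂·C(3d−4, 3d₁−1) ). In particular, in the first sum of (recurs) with b = c = 0 the only possibly nonzero terms are those with (a₁,b₁,c₁) = (3d₁−1,0,0) and (a₂,b₂,c₂) = (3d₂−1,0,0), and the second, third and fourth sums of (recurs) are empty. -/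
noncomputable section

/-- Binomial coefficient C(n, r) with an integer lower index, vanishing for r < 0. -/
def C (n : ℕ) (r : ℤ) : ℚ := if r < 0 then 0 else (n.choose r.toNat : ℚ)

/-- The right-hand side of the contact recursion (recurs) of the paper:
N_d(a,b,c) = S₁ + 2S₂ + 4S₃ + 2S₄, with sums over d₁ + d₂ = d (d₁, d₂ > 0) and
the indicated splittings of a, b, c, with the paper's degree and binomial weights. -/
def recursRHS (N : ℕ → ℕ → ℕ → ℕ → ℚ) (d a b c : ℕ) : ℚ :=
  (∑ d1 ∈ Finset.Ico 1 d, ∑ a1 ∈ Finset.range a,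
    ∑ b1 ∈ Finset.range (b + 1), ∑ c1 ∈ Finset.range (c + 1),
      N d1 a1 b1 c1 * N (d - d1) (a - 1 - a1) (b - b1) (c - c1) *
        ((d1 : ℚ) ^ 2 * ((d - d1 : ℕ) : ℚ) ^ 2 * C (a - 3) ((a1 : ℤ) - 1) -
         (d1 : ℚ) ^ 3 * ((d - d1 : ℕ) : ℚ) * C (a - 3) (a1 : ℤ)) *
        (b.choose b1 : ℚ) * (c.choose c1 : ℚ)) +
  2 * (∑ d1 ∈ Finset.Ico 1 d, ∑ a1 ∈ Finset.range (a + 1),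
    ∑ b1 ∈ Finset.range b, ∑ c1 ∈ Finset.range (c + 1),
      N d1 a1 b1 c1 * N (d - d1) (a - a1) (b - 1 - b1) (c - c1) *
        ((d1 : ℚ) ^ 2 * ((d - d1 : ℕ) : ℚ) * C (a - 3) ((a1 : ℤ) - 1) -
         (d1 : ℚ) ^ 3 * C (a - 3) (a1 : ℤ)) *
        ((b.factorial : ℚ) / ((b1.factorial : ℚ) * ((b - 1 - b1).factorial : ℚ) *
          (Nat.factorial 1 : ℚ))) * (c.choose c1 : ℚ)) +
  4 * (∑ d1 ∈ Finset.Ico 1 d, ∑ a1 ∈ Finset.range (a + 2),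
    ∑ b1 ∈ Finset.range (b - 1), ∑ c1 ∈ Finset.range (c + 1),
      N d1 a1 b1 c1 * N (d - d1) (a + 1 - a1) (b - 2 - b1) (c - c1) *
        ((d1 : ℚ) * ((d - d1 : ℕ) : ℚ) * C (a - 3) ((a1 : ℤ) - 2) -
         (d1 : ℚ) ^ 2 * C (a - 3) ((a1 : ℤ) - 1)) *
        ((b.factorial : ℚ) / ((b1.factorial : ℚ) * ((b - 2 - b1).factorial : ℚ) *
          (Nat.factorial 2 : ℚ))) * (c.choose c1 : ℚ)) +
  2 * (∑ d1 ∈ Finset.Ico 1 d, ∑ a1 ∈ Finset.range (a + 2),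
    ∑ b1 ∈ Finset.range (b + 1), ∑ c1 ∈ Finset.range c,
      N d1 a1 b1 c1 * N (d - d1) (a + 1 - a1) (b - b1) (c - 1 - c1) *
        ((d1 : ℚ) * ((d - d1 : ℕ) : ℚ) * C (a - 3) ((a1 : ℤ) - 2) -
         (d1 : ℚ) ^ 2 * C (a - 3) ((a1 : ℤ) - 1)) *
        (b.choose b1 : ℚ) *
        ((c.factorial : ℚ) / ((c1.factorial : ℚ) * ((c - 1 - c1).factorial : ℚ) *
          (Nat.factorial 1 : ℚ))))

/-- For b = c = 0 and a = 3d − 1 the contact recursion reduces exactly to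
Kontsevich's formula. -/
theorem recurs_specializes_to_kontsevich (N : ℕ → ℕ → ℕ → ℕ → ℚ)
    (hzero : ∀ d a b c, 1 ≤ d → a + b + 2 * c ≠ 3 * d - 1 → N d a b c = 0)
    (hrec : ∀ d a b c, 2 ≤ d → 3 ≤ a → a + b + 2 * c = 3 * d - 1 →
      N d a b c = recursRHS N d a b c) :
    ∀ d, 2 ≤ d →
      N d (3 * d - 1) 0 0 =
        ∑ d1 ∈ Finset.Ico 1 d,
          N d1 (3 * d1 - 1) 0 0 * N (d - d1) (3 * (d - d1) - 1) 0 0 *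
            ((d1 : ℚ) ^ 2 * ((d - d1 : ℕ) : ℚ) ^ 2 *
              ((3 * d - 4).choose (3 * d1 - 2) : ℚ) -
             (d1 : ℚ) ^ 3 * ((d - d1 : ℕ) : ℚ) *
              ((3 * d - 4).choose (3 * d1 - 1) : ℚ)) := by
  intro d hd
  rw [hrec d (3 * d - 1) 0 0 hd (by omega) (by omega)]
  unfold recursRHS
  simp only [Nat.zero_sub, Finset.range_zero, Finset.sum_empty, Finset.sum_const_zero,
    mul_zero, add_zero, zero_add, Finset.sum_range_one, Nat.choose_self, Nat.cast_one,
    mul_one]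
  refine Finset.sum_congr rfl ?_
  intro d1 hd1
  rw [Finset.mem_Ico] at hd1
  rw [Finset.sum_eq_single (3 * d1 - 1)]
  · have h1 : 3 * d - 1 - 1 - (3 * d1 - 1) = 3 * (d - d1) - 1 := by omega
    have h2 : 3 * d - 1 - 3 = 3 * d - 4 := by omega
    have h3 : ((3 * d1 - 1 : ℕ) : ℤ) - 1 = ((3 * d1 - 2 : ℕ) : ℤ) := by omega
    rw [h1, h2, h3]
    have hC1 : C (3 * d - 4) ((3 * d1 - 2 : ℕ) : ℤ) = ((3 * d - 4).choose (3 * d1 - 2) : ℚ) := by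
      simp [C]
    have hC2 : C (3 * d - 4) ((3 * d1 - 1 : ℕ) : ℤ) = ((3 * d - 4).choose (3 * d1 - 1) : ℚ) := by
      simp [C]
    rw [hC1, hC2]
  · intro a1 _ hne
    have : N d1 a1 0 0 = 0 := hzero d1 a1 0 0 hd1.1 (by omega)
    simp [this]
  · intro h
    exfalso
    exact h (Finset.mem_range.mpr (by omega))
end
end

section
/- Let (N_d)_{d≥1} be rational numbers and define, as a formal power series identity, Φ = Σ_{d≥1} N_d · e^{dx} · y^{3d−1}/(3d−1)! in the formal variables x and y (where e^{dx} = Σ_{m≥0} dᵐxᵐ/m!). Then Φ satisfies the WDVV equation Φ_yyy = Φ_xxy² − Φ_xxx·Φ_xyy (equality of formal power series in x and y, subscripts denoting formal partial derivatives) if and only if for every d ≥ 2: N_d = Σ_{d₁+d₂=d, d₁,d₂≥1} N_{d₁}N_{d₂}·( d₁²d₂²·C(3d−4, 3d₁−2) − d₁³d₂·C(3d−4, 3d₁−1) ). -/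
noncomputable section

/-- Formal ∂/∂x on a power series in x. -/
def dx (g : PowerSeries ℚ) : PowerSeries ℚ :=
  PowerSeries.mk fun m => ((m : ℚ) + 1) * PowerSeries.coeff (R := ℚ) (m + 1) g

/-- Formal ∂/∂x on a power series in y with coefficients power series in x. -/
def DX (f : PowerSeries (PowerSeries ℚ)) : PowerSeries (PowerSeries ℚ) :=
  PowerSeries.mk fun n => dx (PowerSeries.coeff (R := PowerSeries ℚ) n f)

/-- Formal ∂/∂y on a power series in y with coefficients power series in x. -/
def DY (f : PowerSeries (PowerSeries ℚ)) : PowerSeries (PowerSeries ℚ) :=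
  PowerSeries.mk fun n =>
    PowerSeries.C (R := ℚ) ((n : ℚ) + 1) * PowerSeries.coeff (R := PowerSeries ℚ) (n + 1) f

/-- The potential Φ = Σ_{d≥1} N_d e^{dx} y^{3d−1}/(3d−1)!: the coefficient of yⁿ is
N_d·e^{dx}/n! when n = 3d − 1 (i.e. n ≡ 2 mod 3, d = (n+1)/3), and 0 otherwise,
where e^{dx} = Σ_{m≥0} dᵐxᵐ/m!. -/
def Phi (N : ℕ → ℚ) : PowerSeries (PowerSeries ℚ) :=
  PowerSeries.mk fun n =>
    if n % 3 = 2 then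
      PowerSeries.mk fun m =>
        N ((n + 1) / 3) * (((n + 1) / 3 : ℕ) : ℚ) ^ m /
          ((m.factorial : ℚ) * (n.factorial : ℚ))
    else 0

open PowerSeries

/-- e^{dx} -/
def E (d : ℚ) : PowerSeries ℚ := rescale d (exp ℚ)

def G (a d : ℚ) : PowerSeries ℚ := PowerSeries.C (R := ℚ) a * E d

lemma coeff_E (d : ℚ) (m : ℕ) : coeff (R := ℚ) m (E d) = d ^ m / m.factorial := by
  simp [E, coeff_rescale, coeff_exp, Algebra.algebraMap_self, mul_one_div, div_eq_mul_inv]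

lemma coeff_G (a d : ℚ) (m : ℕ) : coeff (R := ℚ) m (G a d) = a * (d ^ m / m.factorial) := by
  simp [G, coeff_C_mul, coeff_E]

lemma G_mul_G (a b e f : ℚ) : G a e * G b f = G (a * b) (e + f) := by
  have h := exp_mul_exp_eq_exp_add (A := ℚ) e f
  simp only [G, E]
  rw [mul_mul_mul_comm, ← map_mul, h]

lemma dx_G (a d : ℚ) : dx (G a d) = G (a * d) d := by
  ext m
  simp only [dx, coeff_mk, coeff_G]
  rw [Nat.factorial_succ, pow_succ]
  push_cast
  have h1 : (m.factorial : ℚ) ≠ 0 := Nat.cast_ne_zero.2 m.factorial_ne_zero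
  field_simp

lemma dx_zero : dx 0 = 0 := by
  ext m; simp [dx]

lemma G_inj (a b d : ℚ) (h : G a d = G b d) : a = b := by
  have := congrArg (coeff (R := ℚ) 0) h
  simpa [coeff_G] using this

lemma G_congr {a b : ℚ} (d : ℚ) (h : a = b) : G a d = G b d := by rw [h]

lemma C_mul_G (c a d : ℚ) : PowerSeries.C (R := ℚ) c * G a d = G (c * a) d := by
  simp [G, mul_assoc]




variable (N : ℕ → ℚ)

lemma coeff_Phi (n : ℕ) :
    coeff n (Phi N) =
      if n % 3 = 2 then G (N ((n + 1) / 3) / n.factorial) (((n + 1) / 3 : ℕ) : ℚ) else 0 := by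
  simp only [Phi, coeff_mk]
  split
  · ext m
    simp only [coeff_mk, coeff_G]
    rw [div_mul_div_comm, mul_comm ((n.factorial : ℚ))]
  · rfl

lemma coeff_DY (f : PowerSeries (PowerSeries ℚ)) (n : ℕ) :
    coeff n (DY f) = PowerSeries.C (R := ℚ) ((n : ℚ) + 1) * coeff (n + 1) f := coeff_mk _ _

lemma coeff_DX (f : PowerSeries (PowerSeries ℚ)) (n : ℕ) :
    coeff n (DX f) = dx (coeff n f) := coeff_mk _ _

/-- LHS: Φ_yyy -/
lemma coeff_T3 (n : ℕ) :
    coeff n (DY (DY (DY (Phi N)))) =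
      if n % 3 = 2 then G (N ((n + 4) / 3) / n.factorial) (((n + 4) / 3 : ℕ) : ℚ) else 0 := by
  rw [coeff_DY, coeff_DY, coeff_DY, coeff_Phi]
  by_cases hn : n % 3 = 2
  · have h3 : (n + 1 + 1 + 1) % 3 = 2 := by omega
    have h4 : (n + 1 + 1 + 1 + 1) / 3 = (n + 4) / 3 := by omega
    rw [if_pos h3, if_pos hn, h4, C_mul_G, C_mul_G, C_mul_G]
    apply G_congr
    simp only [Nat.factorial_succ]
    have h1 : (n.factorial : ℚ) ≠ 0 := Nat.cast_ne_zero.2 n.factorial_ne_zero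
    push_cast
    field_simp
    ring
  · have h3 : ¬((n + 1 + 1 + 1) % 3 = 2) := by omega
    rw [if_neg h3, if_neg hn, mul_zero, mul_zero, mul_zero]

/-- Φ_xxy -/
lemma coeff_A (n : ℕ) :
    coeff n (DX (DX (DY (Phi N)))) =
      if n % 3 = 1 then
        G (N ((n + 2) / 3) * (((n + 2) / 3 : ℕ) : ℚ) ^ 2 / n.factorial) (((n + 2) / 3 : ℕ) : ℚ)
      else 0 := by
  rw [coeff_DX, coeff_DX, coeff_DY, coeff_Phi]
  by_cases hn : n % 3 = 1
  · have h3 : (n + 1) % 3 = 2 := by omega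
    have h4 : (n + 1 + 1) / 3 = (n + 2) / 3 := by omega
    rw [if_pos h3, if_pos hn, h4, C_mul_G, dx_G, dx_G]
    apply G_congr
    simp only [Nat.factorial_succ]
    have h1 : (n.factorial : ℚ) ≠ 0 := Nat.cast_ne_zero.2 n.factorial_ne_zero
    push_cast
    field_simp
  · have h3 : ¬((n + 1) % 3 = 2) := by omega
    rw [if_neg h3, if_neg hn, mul_zero, dx_zero, dx_zero]

/-- Φ_xxx -/
lemma coeff_B (n : ℕ) :
    coeff n (DX (DX (DX (Phi N)))) =
      if n % 3 = 2 then
        G (N ((n + 1) / 3) * (((n + 1) / 3 : ℕ) : ℚ) ^ 3 / n.factorial) (((n + 1) / 3 : ℕ) : ℚ)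
      else 0 := by
  rw [coeff_DX, coeff_DX, coeff_DX, coeff_Phi]
  by_cases hn : n % 3 = 2
  · rw [if_pos hn, if_pos hn, dx_G, dx_G, dx_G]
    apply G_congr
    ring
  · rw [if_neg hn, if_neg hn, dx_zero, dx_zero, dx_zero]

/-- Φ_xyy -/
lemma coeff_Cc (n : ℕ) :
    coeff n (DX (DY (DY (Phi N)))) =
      if n % 3 = 0 then
        G (N ((n + 3) / 3) * (((n + 3) / 3 : ℕ) : ℚ) / n.factorial) (((n + 3) / 3 : ℕ) : ℚ)
      else 0 := by
  rw [coeff_DX, coeff_DY, coeff_DY, coeff_Phi]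
  by_cases hn : n % 3 = 0
  · have h3 : (n + 1 + 1) % 3 = 2 := by omega
    have h4 : (n + 1 + 1 + 1) / 3 = (n + 3) / 3 := by omega
    rw [if_pos h3, if_pos hn, h4, C_mul_G, C_mul_G, dx_G]
    apply G_congr
    simp only [Nat.factorial_succ]
    have h1 : (n.factorial : ℚ) ≠ 0 := Nat.cast_ne_zero.2 n.factorial_ne_zero
    push_cast
    field_simp
  · have h3 : ¬((n + 1 + 1) % 3 = 2) := by omega
    rw [if_neg h3, if_neg hn, mul_zero, mul_zero, dx_zero]

open Finset in
lemma coeff_AA_zero (n : ℕ) (hn : n % 3 ≠ 2) :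
    coeff n (DX (DX (DY (Phi N))) * DX (DX (DY (Phi N)))) = 0 := by
  rw [coeff_mul]
  apply Finset.sum_eq_zero
  intro x hx
  rw [Finset.HasAntidiagonal.mem_antidiagonal] at hx
  rw [coeff_A, coeff_A]
  by_cases h1 : x.1 % 3 = 1
  · have h2 : ¬(x.2 % 3 = 1) := by omega
    rw [if_neg h2, mul_zero]
  · rw [if_neg h1, zero_mul]

open Finset in
lemma coeff_BC_zero (n : ℕ) (hn : n % 3 ≠ 2) :
    coeff n (DX (DX (DX (Phi N))) * DX (DY (DY (Phi N)))) = 0 := by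
  rw [coeff_mul]
  apply Finset.sum_eq_zero
  intro x hx
  rw [Finset.HasAntidiagonal.mem_antidiagonal] at hx
  rw [coeff_B, coeff_Cc]
  by_cases h1 : x.1 % 3 = 2
  · have h2 : ¬(x.2 % 3 = 0) := by omega
    rw [if_neg h2, mul_zero]
  · rw [if_neg h1, zero_mul]

lemma G_sum {s : Finset ℕ} (f : ℕ → ℚ) (d : ℚ) :
    ∑ i ∈ s, G (f i) d = G (∑ i ∈ s, f i) d := by
  simp only [G, ← Finset.sum_mul, map_sum]

open Finset in
lemma coeff_AA (d : ℕ) (hd : 2 ≤ d) :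
    coeff (3 * d - 4) (DX (DX (DY (Phi N))) * DX (DX (DY (Phi N)))) =
      G (∑ d1 ∈ Finset.Ico 1 d,
          N d1 * N (d - d1) *
            ((d1 : ℚ) ^ 2 * ((d - d1 : ℕ) : ℚ) ^ 2 /
              (((3 * d1 - 2).factorial : ℚ) * ((3 * (d - d1) - 2).factorial : ℚ)))) (d : ℚ) := by
  rw [coeff_mul, ← G_sum]
  have hstep : ∀ x ∈ Finset.HasAntidiagonal.antidiagonal (3 * d - 4),
      coeff x.1 (DX (DX (DY (Phi N)))) * coeff x.2 (DX (DX (DY (Phi N)))) =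
      if x.1 % 3 = 1 then
        G (N ((x.1 + 2) / 3) * (((x.1 + 2) / 3 : ℕ) : ℚ) ^ 2 / (x.1.factorial : ℚ) *
            (N ((x.2 + 2) / 3) * (((x.2 + 2) / 3 : ℕ) : ℚ) ^ 2 / (x.2.factorial : ℚ))) (d : ℚ)
      else 0 := by
    intro x hx
    rw [Finset.HasAntidiagonal.mem_antidiagonal] at hx
    rw [coeff_A, coeff_A]
    by_cases h1 : x.1 % 3 = 1
    · have h2 : x.2 % 3 = 1 := by omega
      rw [if_pos h1, if_pos h2, if_pos h1, G_mul_G]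
      have hq : (x.1 + 2) / 3 + (x.2 + 2) / 3 = d := by omega
      rw [← Nat.cast_add, hq]
    · rw [if_neg h1, if_neg h1, zero_mul]
  rw [Finset.sum_congr rfl hstep, ← Finset.sum_filter]
  refine Finset.sum_nbij' (fun x => (x.1 + 2) / 3) (fun d1 => (3 * d1 - 2, 3 * (d - d1) - 2))
    ?_ ?_ ?_ ?_ ?_
  · intro x hx
    simp only [Finset.mem_filter, Finset.HasAntidiagonal.mem_antidiagonal] at hx
    simp only [Finset.mem_Ico]
    omega
  · intro d1 hd1
    simp only [Finset.mem_Ico] at hd1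
    simp only [Finset.mem_filter, Finset.HasAntidiagonal.mem_antidiagonal]
    omega
  · intro x hx
    simp only [Finset.mem_filter, Finset.HasAntidiagonal.mem_antidiagonal] at hx
    obtain ⟨p, q⟩ := x
    simp only [Prod.mk.injEq]
    constructor <;> omega
  · intro d1 hd1
    simp only [Finset.mem_Ico] at hd1
    dsimp only
    omega
  · intro x hx
    simp only [Finset.mem_filter, Finset.HasAntidiagonal.mem_antidiagonal] at hx
    obtain ⟨p, q⟩ := x
    obtain ⟨d1, h1, h2, hp, hq⟩ :
        ∃ k, 1 ≤ k ∧ k < d ∧ p = 3 * k - 2 ∧ q = 3 * (d - k) - 2 :=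
      ⟨(p + 2) / 3, by omega, by omega, by omega, by omega⟩
    subst hp hq
    dsimp only
    have e1 : (3 * d1 - 2 + 2) / 3 = d1 := by omega
    have e2 : (3 * (d - d1) - 2 + 2) / 3 = d - d1 := by omega
    rw [e1, e2]
    apply G_congr
    ring

open Finset in
lemma coeff_BC (d : ℕ) (hd : 2 ≤ d) :
    coeff (3 * d - 4) (DX (DX (DX (Phi N))) * DX (DY (DY (Phi N)))) =
      G (∑ d1 ∈ Finset.Ico 1 d,
          N d1 * N (d - d1) *
            ((d1 : ℚ) ^ 3 * ((d - d1 : ℕ) : ℚ) /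
              (((3 * d1 - 1).factorial : ℚ) * ((3 * (d - d1) - 3).factorial : ℚ)))) (d : ℚ) := by
  rw [coeff_mul, ← G_sum]
  have hstep : ∀ x ∈ Finset.HasAntidiagonal.antidiagonal (3 * d - 4),
      coeff x.1 (DX (DX (DX (Phi N)))) * coeff x.2 (DX (DY (DY (Phi N)))) =
      if x.1 % 3 = 2 then
        G (N ((x.1 + 1) / 3) * (((x.1 + 1) / 3 : ℕ) : ℚ) ^ 3 / (x.1.factorial : ℚ) *
            (N ((x.2 + 3) / 3) * (((x.2 + 3) / 3 : ℕ) : ℚ) / (x.2.factorial : ℚ))) (d : ℚ)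
      else 0 := by
    intro x hx
    rw [Finset.HasAntidiagonal.mem_antidiagonal] at hx
    rw [coeff_B, coeff_Cc]
    by_cases h1 : x.1 % 3 = 2
    · have h2 : x.2 % 3 = 0 := by omega
      rw [if_pos h1, if_pos h2, if_pos h1, G_mul_G]
      have hq : (x.1 + 1) / 3 + (x.2 + 3) / 3 = d := by omega
      rw [← Nat.cast_add, hq]
    · rw [if_neg h1, if_neg h1, zero_mul]
  rw [Finset.sum_congr rfl hstep, ← Finset.sum_filter]
  refine Finset.sum_nbij' (fun x => (x.1 + 1) / 3) (fun d1 => (3 * d1 - 1, 3 * (d - d1) - 3))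
    ?_ ?_ ?_ ?_ ?_
  · intro x hx
    simp only [Finset.mem_filter, Finset.HasAntidiagonal.mem_antidiagonal] at hx
    simp only [Finset.mem_Ico]
    omega
  · intro d1 hd1
    simp only [Finset.mem_Ico] at hd1
    simp only [Finset.mem_filter, Finset.HasAntidiagonal.mem_antidiagonal]
    omega
  · intro x hx
    simp only [Finset.mem_filter, Finset.HasAntidiagonal.mem_antidiagonal] at hx
    obtain ⟨p, q⟩ := x
    simp only [Prod.mk.injEq]
    constructor <;> omega
  · intro d1 hd1
    simp only [Finset.mem_Ico] at hd1
    dsimp only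
    omega
  · intro x hx
    simp only [Finset.mem_filter, Finset.HasAntidiagonal.mem_antidiagonal] at hx
    obtain ⟨p, q⟩ := x
    obtain ⟨d1, h1, h2, hp, hq⟩ :
        ∃ k, 1 ≤ k ∧ k < d ∧ p = 3 * k - 1 ∧ q = 3 * (d - k) - 3 :=
      ⟨(p + 1) / 3, by omega, by omega, by omega, by omega⟩
    subst hp hq
    dsimp only
    have e1 : (3 * d1 - 1 + 1) / 3 = d1 := by omega
    have e2 : (3 * (d - d1) - 3 + 3) / 3 = d - d1 := by omega
    rw [e1, e2]
    apply G_congr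
    ring

lemma G_sub (a b d : ℚ) : G a d - G b d = G (a - b) d := by
  simp [G, sub_mul, map_sub]

lemma scalar_iff (d : ℕ) (hd : 2 ≤ d) :
    (N d / (((3 * d - 4).factorial : ℕ) : ℚ) =
      ∑ d1 ∈ Finset.Ico 1 d,
        (N d1 * N (d - d1) *
            ((d1 : ℚ) ^ 2 * ((d - d1 : ℕ) : ℚ) ^ 2 /
              (((3 * d1 - 2).factorial : ℚ) * ((3 * (d - d1) - 2).factorial : ℚ))) -
          N d1 * N (d - d1) *
            ((d1 : ℚ) ^ 3 * ((d - d1 : ℕ) : ℚ) /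
              (((3 * d1 - 1).factorial : ℚ) * ((3 * (d - d1) - 3).factorial : ℚ))))) ↔
    N d =
      ∑ d1 ∈ Finset.Ico 1 d,
        N d1 * N (d - d1) *
          ((d1 : ℚ) ^ 2 * ((d - d1 : ℕ) : ℚ) ^ 2 *
              ((3 * d - 4).choose (3 * d1 - 2) : ℚ) -
            (d1 : ℚ) ^ 3 * ((d - d1 : ℕ) : ℚ) *
              ((3 * d - 4).choose (3 * d1 - 1) : ℚ)) := by
  have hfac : (((3 * d - 4).factorial : ℕ) : ℚ) ≠ 0 :=
    Nat.cast_ne_zero.2 (Nat.factorial_ne_zero _)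
  rw [div_eq_iff hfac, Finset.sum_mul]
  constructor <;> intro h <;> rw [h] <;> apply Finset.sum_congr rfl <;> intro d1 hd1 <;>
    simp only [Finset.mem_Ico] at hd1
  all_goals {
    have h1 : 3 * d1 - 2 ≤ 3 * d - 4 := by omega
    have h2 : 3 * d1 - 1 ≤ 3 * d - 4 := by omega
    have e1 : 3 * d - 4 - (3 * d1 - 2) = 3 * (d - d1) - 2 := by omega
    have e2 : 3 * d - 4 - (3 * d1 - 1) = 3 * (d - d1) - 3 := by omega
    rw [Nat.cast_choose ℚ h1, Nat.cast_choose ℚ h2, e1, e2]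
    have hA : (((3 * d1 - 2).factorial : ℕ) : ℚ) ≠ 0 := Nat.cast_ne_zero.2 (Nat.factorial_ne_zero _)
    have hB : (((3 * (d - d1) - 2).factorial : ℕ) : ℚ) ≠ 0 :=
      Nat.cast_ne_zero.2 (Nat.factorial_ne_zero _)
    have hC : (((3 * d1 - 1).factorial : ℕ) : ℚ) ≠ 0 := Nat.cast_ne_zero.2 (Nat.factorial_ne_zero _)
    have hD : (((3 * (d - d1) - 3).factorial : ℕ) : ℚ) ≠ 0 :=
      Nat.cast_ne_zero.2 (Nat.factorial_ne_zero _)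
    field_simp }


/-- Φ satisfies the WDVV equation Φ_yyy = Φ_xxy² − Φ_xxx·Φ_xyy if and only if the
numbers N_d satisfy Kontsevich's recursion for every d ≥ 2. -/
theorem wdvv_iff_kontsevich_recursion (N : ℕ → ℚ) :
    DY (DY (DY (Phi N))) =
        DX (DX (DY (Phi N))) * DX (DX (DY (Phi N))) -
          DX (DX (DX (Phi N))) * DX (DY (DY (Phi N))) ↔
      ∀ d, 2 ≤ d →
        N d =
          ∑ d1 ∈ Finset.Ico 1 d,
            N d1 * N (d - d1) *
              ((d1 : ℚ) ^ 2 * ((d - d1 : ℕ) : ℚ) ^ 2 *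
                  ((3 * d - 4).choose (3 * d1 - 2) : ℚ) -
                (d1 : ℚ) ^ 3 * ((d - d1 : ℕ) : ℚ) *
                  ((3 * d - 4).choose (3 * d1 - 1) : ℚ)) := by
  constructor
  · intro h d hd
    have hc := congrArg (coeff (3 * d - 4)) h
    rw [map_sub, coeff_T3, coeff_AA N d hd, coeff_BC N d hd, G_sub] at hc
    have hm : (3 * d - 4) % 3 = 2 := by omega
    have he : (3 * d - 4 + 4) / 3 = d := by omega
    rw [if_pos hm, he] at hc
    have := G_inj _ _ _ hc
    rw [← Finset.sum_sub_distrib] at this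
    exact (scalar_iff N d hd).1 this
  · intro h
    ext n
    rw [map_sub]
    by_cases hn : n % 3 = 2
    · obtain ⟨d, hd, rfl⟩ : ∃ d, 2 ≤ d ∧ n = 3 * d - 4 := ⟨(n + 4) / 3, by omega, by omega⟩
      rw [coeff_T3, coeff_AA N d hd, coeff_BC N d hd, G_sub]
      have hm : (3 * d - 4) % 3 = 2 := by omega
      have he : (3 * d - 4 + 4) / 3 = d := by omega
      rw [if_pos hm, he]
      exact congrArg _ (G_congr _ (by
        rw [← Finset.sum_sub_distrib]
        exact (scalar_iff N d hd).2 (h d hd)))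
    · rw [coeff_T3, if_neg hn, coeff_AA_zero N n hn, coeff_BC_zero N n hn, sub_zero]
end
end
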